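/- arXiv:1609.06579 — 7 statements merged into one kernel-verified Lean document; each statement's English description precedes it below -/
import Mathlib

section
/- Suppose ω^i_{jk} and ω̄^i_{jk} are smooth families on U, each symmetric in the indices j and k, such that P^i_{(jk)} = ω̄^i_{jk} − ω^i_{jk} for all i, j, k. Then the geometrical object W^i_{jmn} := R^i_{jmn} − ω^i_{jm|n} + ω^i_{jn|m} + Σ_α (ω^α_{jm} ω^i_{αn} − ω^α_{jn} ω^i_{αm}) is an invariant of the mapping: R̄^i_{jmn} − ω̄^i_{jm‖n} + ω̄^i_{jn‖m} + Σ_α (ω̄^α_{jm} ω̄^i_{αn} − ω̄^α_{jn} ω̄^i_{αm}) = W^i_{jmn} on U for all i, j, m, n (the basic second-class associated invariant of the Weyl type). -/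
open scoped BigOperators

abbrev Pt (N : ℕ) := EuclideanSpace ℝ (Fin N)
abbrev Conn (N : ℕ) := Fin N → Fin N → Fin N → Pt N → ℝ

/-- partial derivative in the `l`-th coordinate direction -/
noncomputable def pd {N : ℕ} (l : Fin N) (f : Pt N → ℝ) (x : Pt N) : ℝ :=
  fderiv ℝ f x (EuclideanSpace.single l 1)

/-- symmetric part `L^i_{(jk)}` -/
noncomputable def symC {N : ℕ} (L : Conn N) : Conn N :=
  fun i j k x => (1/2) * (L i j k x + L i k j x)

/-- anti-symmetric (torsion) part `L^i_{[jk]}` -/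
noncomputable def torC {N : ℕ} (L : Conn N) : Conn N :=
  fun i j k x => (1/2) * (L i j k x - L i k j x)

/-- covariant derivative `a^i_{jk|l}` with respect to the symmetric part of `L` -/
noncomputable def covD {N : ℕ} (L A : Conn N) (i j k l : Fin N) (x : Pt N) : ℝ :=
  pd l (A i j k) x + ∑ α : Fin N, symC L i α l x * A α j k x
    - ∑ α : Fin N, symC L α j l x * A i α k x
    - ∑ α : Fin N, symC L α k l x * A i j α x

/-- covariant derivative `ρ_{j|l}` of a 1-form with respect to the symmetric part of `L` -/
noncomputable def covD1 {N : ℕ} (L : Conn N) (ρ : Fin N → Pt N → ℝ) (j l : Fin N)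
    (x : Pt N) : ℝ :=
  pd l (ρ j) x - ∑ α : Fin N, symC L α j l x * ρ α x

/-- curvature tensor `R^i_{jmn}` of the symmetric part of `L` -/
noncomputable def curv {N : ℕ} (L : Conn N) (i j m n : Fin N) (x : Pt N) : ℝ :=
  pd n (symC L i j m) x - pd m (symC L i j n) x
    + ∑ α : Fin N, (symC L α j m x * symC L i α n x - symC L α j n x * symC L i α m x)

/-- Ricci tensor `R_{jm} := Σ_α R^α_{jmα}` -/
noncomputable def ric {N : ℕ} (L : Conn N) (j m : Fin N) (x : Pt N) : ℝ :=
  ∑ α : Fin N, curv L α j m α x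

/-- all components of the family are smooth on `U` -/
def SmoothConn {N : ℕ} (U : Set (Pt N)) (L : Conn N) : Prop :=
  ∀ i j k, ContDiffOn ℝ (⊤ : ℕ∞) (L i j k) U

/-- Kronecker delta `δ^i_j` -/
noncomputable def kron {N : ℕ} (i j : Fin N) : ℝ := if i = j then 1 else 0
/-- the basic second-class associated invariant of the Weyl type. -/
theorem weyl_type_second_class_basic
    {N : ℕ} (hN : 2 ≤ N) (U : Set (Pt N)) (hU : IsOpen U)
    (L Lb ω ωb : Conn N)
    (hL : SmoothConn U L) (hLb : SmoothConn U Lb)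
    (hω : SmoothConn U ω) (hωb : SmoothConn U ωb)
    (hωsym : ∀ i j k x, ω i j k x = ω i k j x)
    (hωbsym : ∀ i j k x, ωb i j k x = ωb i k j x)
    (hP : ∀ i j k, ∀ x ∈ U,
      symC (fun a b c y => Lb a b c y - L a b c y) i j k x = ωb i j k x - ω i j k x) :
    ∀ i j m n, ∀ x ∈ U,
      curv Lb i j m n x - covD Lb ωb i j m n x + covD Lb ωb i j n m x
        + ∑ α : Fin N, (ωb α j m x * ωb i α n x - ωb α j n x * ωb i α m x)
      = curv L i j m n x - covD L ω i j m n x + covD L ω i j n m x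
        + ∑ α : Fin N, (ω α j m x * ω i α n x - ω α j n x * ω i α m x) := by
  intro i j m n x hx
  have hmem : U ∈ nhds x := hU.mem_nhds hx
  -- differentiability of all components at x
  have hd : ∀ (M : Conn N), SmoothConn U M → ∀ a b c, DifferentiableAt ℝ (M a b c) x :=
    fun M hM a b c => ((hM a b c).contDiffAt hmem).differentiableAt (by simp)
  have hdS : ∀ a b c, DifferentiableAt ℝ (symC L a b c) x := by
    intro a b c
    have : DifferentiableAt ℝ (fun y => (1/2 : ℝ) * (L a b c y + L a c b y)) x :=
      ((hd L hL a b c).add (hd L hL a c b)).const_mul _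
    exact this
  -- pointwise relation between the symmetric parts
  have hsym : ∀ a b c y, y ∈ U →
      symC Lb a b c y = symC L a b c y + ωb a b c y - ω a b c y := by
    intro a b c y hy
    have h1 := hP a b c y hy
    simp only [symC] at h1 ⊢
    linarith
  have hsx : ∀ a b c, symC Lb a b c x = symC L a b c x + ωb a b c x - ω a b c x :=
    fun a b c => hsym a b c x hx
  -- derivatives of the symmetric parts
  have hpd : ∀ a b c l, pd l (symC Lb a b c) x
      = pd l (symC L a b c) x + pd l (ωb a b c) x - pd l (ω a b c) x := by
    intro a b c l
    have hev : symC Lb a b c =ᶠ[nhds x]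
        fun y => symC L a b c y + ωb a b c y - ω a b c y :=
      Filter.eventuallyEq_of_mem hmem (fun y hy => hsym a b c y hy)
    have h2 : DifferentiableAt ℝ (fun y => symC L a b c y + ωb a b c y) x :=
      (hdS a b c).add (hd ωb hωb a b c)
    simp only [pd]
    rw [hev.fderiv_eq, fderiv_fun_sub h2 (hd ω hω a b c), fderiv_fun_add (hdS a b c) (hd ωb hωb a b c)]
    simp
  -- symmetry of the remaining objects at x, in the indices m n
  have hs2 : ∀ a, symC L a n m x = symC L a m n x := by
    intro a; simp only [symC]; ring
  have hw2 : ∀ a, ω a n m x = ω a m n x := fun a => (hωsym a m n x).symm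
  have hwb2 : ∀ a, ωb a n m x = ωb a m n x := fun a => (hωbsym a m n x).symm
  simp only [curv, covD, hpd, hsx, hs2, hw2, hwb2]
  simp only [mul_add, add_mul, mul_sub, sub_mul, Finset.sum_add_distrib,
    Finset.sum_sub_distrib]
  ring_nf
  simp only [mul_comm, mul_left_comm]
  ring
end

section
/- Suppose there are smooth families ρ_j, ρ̄_j and σ^i_{jk}, σ̄^i_{jk} on U, with σ and σ̄ symmetric in j and k, such that P^i_{(jk)} = (δ^i_j ρ̄_k + δ^i_k ρ̄_j + σ̄^i_{jk}) − (δ^i_j ρ_k + δ^i_k ρ_j + σ^i_{jk}) for all i, j, k. Then the geometrical object T^i_{jk} := L^i_{(jk)} − σ^i_{jk} − (1/(N+1)) [ (Σ_α L^α_{(jα)} − Σ_α σ^α_{jα}) δ^i_k + (Σ_α L^α_{(kα)} − Σ_α σ^α_{kα}) δ^i_j ] is an invariant of the mapping, i.e. the object defined by the same formula from L̄ and σ̄ coincides with T^i_{jk} on U (the derived associated invariant of the Thomas type of Corollary 2.1). -/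
open scoped BigOperators

/-- the derived associated invariant of the Thomas type (Corollary 2.1). -/
theorem thomas_type_derived
    {N : ℕ} (hN : 2 ≤ N) (U : Set (Pt N)) (hU : IsOpen U)
    (L Lb σ σb : Conn N) (ρ ρb : Fin N → Pt N → ℝ)
    (hL : SmoothConn U L) (hLb : SmoothConn U Lb)
    (hσ : SmoothConn U σ) (hσb : SmoothConn U σb)
    (hρ : ∀ j, ContDiffOn ℝ (⊤ : ℕ∞) (ρ j) U) (hρb : ∀ j, ContDiffOn ℝ (⊤ : ℕ∞) (ρb j) U)
    (hσsym : ∀ i j k x, σ i j k x = σ i k j x)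
    (hσbsym : ∀ i j k x, σb i j k x = σb i k j x)
    (hP : ∀ i j k, ∀ x ∈ U,
      symC (fun a b c y => Lb a b c y - L a b c y) i j k x
        = (kron i j * ρb k x + kron i k * ρb j x + σb i j k x)
          - (kron i j * ρ k x + kron i k * ρ j x + σ i j k x)) :
    ∀ i j k, ∀ x ∈ U,
      symC Lb i j k x - σb i j k x
        - (1/((N:ℝ)+1)) *
          (((∑ α : Fin N, symC Lb α j α x) - ∑ α : Fin N, σb α j α x) * kron i k
            + ((∑ α : Fin N, symC Lb α k α x) - ∑ α : Fin N, σb α k α x) * kron i j)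
      = symC L i j k x - σ i j k x
        - (1/((N:ℝ)+1)) *
          (((∑ α : Fin N, symC L α j α x) - ∑ α : Fin N, σ α j α x) * kron i k
            + ((∑ α : Fin N, symC L α k α x) - ∑ α : Fin N, σ α k α x) * kron i j) := by
  intro i j k x hx
  have key : ∀ a b c : Fin N, symC Lb a b c x = symC L a b c x
      + kron a b * (ρb c x - ρ c x) + kron a c * (ρb b x - ρ b x)
      + (σb a b c x - σ a b c x) := by
    intro a b c
    have h := hP a b c x hx
    simp only [symC] at h ⊢
    linarith
  have tr : ∀ m : Fin N, ((∑ α : Fin N, symC Lb α m α x) - ∑ α : Fin N, σb α m α x)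
      = ((∑ α : Fin N, symC L α m α x) - ∑ α : Fin N, σ α m α x)
        + ((N:ℝ)+1) * (ρb m x - ρ m x) := by
    intro m
    have h1 : (∑ α : Fin N, symC Lb α m α x)
        = (∑ α : Fin N, symC L α m α x)
          + (∑ α : Fin N, kron α m * (ρb α x - ρ α x))
          + (∑ α : Fin N, kron α α * (ρb m x - ρ m x))
          + (∑ α : Fin N, (σb α m α x - σ α m α x)) := by
      rw [← Finset.sum_add_distrib, ← Finset.sum_add_distrib, ← Finset.sum_add_distrib]
      exact Finset.sum_congr rfl fun α _ => key α m α
    have h2 : (∑ α : Fin N, kron α m * (ρb α x - ρ α x)) = ρb m x - ρ m x := by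
      simp [kron, Finset.sum_ite_eq']
    have h3 : (∑ α : Fin N, kron α α * (ρb m x - ρ m x)) = (N:ℝ) * (ρb m x - ρ m x) := by
      simp [kron, Finset.sum_const, mul_comm]; ring
    have h4 : (∑ α : Fin N, (σb α m α x - σ α m α x))
        = (∑ α : Fin N, σb α m α x) - (∑ α : Fin N, σ α m α x) :=
      Finset.sum_sub_distrib _ _
    rw [h1, h2, h3, h4]; ring
  have hk := key i j k
  have hNe : ((N:ℝ)+1) ≠ 0 := by positivity
  rw [hk, tr j, tr k]
  field_simp
  ring
end

section
/- Suppose there are smooth families ρ_j, ρ̄_j and σ^i_{jk}, σ̄^i_{jk} on U, with σ and σ̄ symmetric in j and k, such that P^i_{(jk)} = (δ^i_j ρ̄_k + δ^i_k ρ̄_j + σ̄^i_{jk}) − (δ^i_j ρ_k + δ^i_k ρ_j + σ^i_{jk}) for all i, j, k. Define the Ricci tensor R_{jm} := Σ_α R^α_{jmα} and R_{[mn]} := R_{mn} − R_{nm}. Then the geometrical object W^i_{jmn} := R^i_{jmn} − σ^i_{jm|n} + σ^i_{jn|m} + Σ_α (σ^α_{jm} σ^i_{αn} − σ^α_{jn}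 σ^i_{αm}) + (1/(N+1)) δ^i_j (R_{[mn]} + Σ_α (σ^α_{αm|n} − σ^α_{αn|m})) + (N/(N²−1)) (δ^i_m R_{jn} − δ^i_n R_{jm}) + (1/(N²−1)) (δ^i_m R_{nj} − δ^i_n R_{mj}) − (1/(N²−1)) δ^i_m [ Σ_α (σ^α_{αj|n} − σ^α_{αn|j}) + (N+1) Σ_α (σ^α_{jn|α} − σ^α_{jα|n}) − (N+1) Σ_{α,β} (σ^α_{jn} σ^β_{αβ} − σ^α_{jβ} σ^β_{nα}) ] + (1/(N²−1)) δ^i_n [ Σ_α (σ^α_{αj|m} − σ^α_{αm|j}) + (N+1) Σ_α (σ^α_{jm|α} − σ^α_{jα|m}) − (N+1) Σ_{α,β} (σ^α_{jm} σ^β_{αβ} − σ^α_{jβ} σ^β_{αm}) ] is an invariant of the mapping: the object defined by the same formula from L̄, σ̄, R̄ and ‖ coincides with W^i_{jmn} on U (the derived associated invariant of the Weyl type of Corollary 2.1). -/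
open scoped BigOperators

/-- The derived associated invariant of the Weyl type of Corollary 2.1,
built from a connection family `L` and a symmetric family `σ`. -/
noncomputable def weylDer {N : ℕ} (L σ : Conn N) (i j m n : Fin N) (x : Pt N) : ℝ :=
  curv L i j m n x - covD L σ i j m n x + covD L σ i j n m x
    + ∑ α : Fin N, (σ α j m x * σ i α n x - σ α j n x * σ i α m x)
    + (1/((N:ℝ)+1)) * kron i j *
        ((ric L m n x - ric L n m x)
          + ∑ α : Fin N, (covD L σ α α m n x - covD L σ α α n m x))
    + ((N:ℝ)/((N:ℝ)^2-1)) * (kron i m * ric L j n x - kron i n * ric L j m x)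
    + (1/((N:ℝ)^2-1)) * (kron i m * ric L n j x - kron i n * ric L m j x)
    - (1/((N:ℝ)^2-1)) * kron i m *
        ((∑ α : Fin N, (covD L σ α α j n x - covD L σ α α n j x))
          + ((N:ℝ)+1) * ∑ α : Fin N, (covD L σ α j n α x - covD L σ α j α n x)
          - ((N:ℝ)+1) * ∑ α : Fin N, ∑ β : Fin N,
              (σ α j n x * σ β α β x - σ α j β x * σ β n α x))
    + (1/((N:ℝ)^2-1)) * kron i n *
        ((∑ α : Fin N, (covD L σ α α j m x - covD L σ α α m j x))
          + ((N:ℝ)+1) * ∑ α : Fin N, (covD L σ α j m α x - covD L σ α j α m x)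
          - ((N:ℝ)+1) * ∑ α : Fin N, ∑ β : Fin N,
              (σ α j m x * σ β α β x - σ α j β x * σ β α m x))

namespace WeylAux

noncomputable def curvA {N : ℕ} (v : Fin N → Fin N → Fin N → ℝ)
    (d : Fin N → Fin N → Fin N → Fin N → ℝ) (i j m n : Fin N) : ℝ :=
  d i j m n - d i j n m
    + ∑ α : Fin N, (v α j m * v i α n - v α j n * v i α m)

noncomputable def ricA {N : ℕ} (v : Fin N → Fin N → Fin N → ℝ)
    (d : Fin N → Fin N → Fin N → Fin N → ℝ) (j m : Fin N) : ℝ :=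
  ∑ α : Fin N, curvA v d α j m α

noncomputable def covA {N : ℕ} (v w : Fin N → Fin N → Fin N → ℝ)
    (e : Fin N → Fin N → Fin N → Fin N → ℝ) (i j k l : Fin N) : ℝ :=
  e i j k l + ∑ α : Fin N, v i α l * w α j k
    - ∑ α : Fin N, v α j l * w i α k
    - ∑ α : Fin N, v α k l * w i j α

noncomputable def weylA {N : ℕ} (v : Fin N → Fin N → Fin N → ℝ)
    (d : Fin N → Fin N → Fin N → Fin N → ℝ)
    (w : Fin N → Fin N → Fin N → ℝ)
    (e : Fin N → Fin N → Fin N → Fin N → ℝ) (i j m n : Fin N) : ℝ :=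
  curvA v d i j m n - covA v w e i j m n + covA v w e i j n m
    + ∑ α : Fin N, (w α j m * w i α n - w α j n * w i α m)
    + (1/((N:ℝ)+1)) * kron i j *
        ((ricA v d m n - ricA v d n m)
          + ∑ α : Fin N, (covA v w e α α m n - covA v w e α α n m))
    + ((N:ℝ)/((N:ℝ)^2-1)) * (kron i m * ricA v d j n - kron i n * ricA v d j m)
    + (1/((N:ℝ)^2-1)) * (kron i m * ricA v d n j - kron i n * ricA v d m j)
    - (1/((N:ℝ)^2-1)) * kron i m *
        ((∑ α : Fin N, (covA v w e α α j n - covA v w e α α n j))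
          + ((N:ℝ)+1) * ∑ α : Fin N, (covA v w e α j n α - covA v w e α j α n)
          - ((N:ℝ)+1) * ∑ α : Fin N, ∑ β : Fin N,
              (w α j n * w β α β - w α j β * w β n α))
    + (1/((N:ℝ)^2-1)) * kron i n *
        ((∑ α : Fin N, (covA v w e α α j m - covA v w e α α m j))
          + ((N:ℝ)+1) * ∑ α : Fin N, (covA v w e α j m α - covA v w e α j α m)
          - ((N:ℝ)+1) * ∑ α : Fin N, ∑ β : Fin N,
              (w α j m * w β α β - w α j β * w β α m))

theorem weylDer_eq_weylA {N : ℕ} (L A : Conn N) (i j m n : Fin N) (x : Pt N) :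
    weylDer L A i j m n x
      = weylA (fun a b c => symC L a b c x) (fun a b c l => pd l (symC L a b c) x)
          (fun a b c => A a b c x) (fun a b c l => pd l (A a b c) x) i j m n := rfl

lemma sum_kron_l {N : ℕ} (t : Fin N) (f : Fin N → ℝ) :
    ∑ α : Fin N, kron α t * f α = f t := by
  simp [kron, ite_mul]

lemma sum_kron_r {N : ℕ} (t : Fin N) (f : Fin N → ℝ) :
    ∑ α : Fin N, kron t α * f α = f t := by
  simp [kron, ite_mul]

lemma sum_kron_diag {N : ℕ} (c : ℝ) :
    ∑ _α : Fin N, kron _α _α * c = (N:ℝ) * c := by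
  simp [kron, Finset.sum_const, Finset.card_univ, mul_comm]

end WeylAux

namespace WeylAux

noncomputable def psiA {N : ℕ} (G : Fin N → Fin N → Fin N → ℝ)
    (r : Fin N → ℝ) (dr : Fin N → Fin N → ℝ) (j n : Fin N) : ℝ :=
  -dr j n + (∑ α : Fin N, G α j n * r α) - r j * r n

lemma curv2 {N : ℕ} (G : Fin N → Fin N → Fin N → ℝ)
    (dG : Fin N → Fin N → Fin N → Fin N → ℝ) (r : Fin N → ℝ)
    (dr : Fin N → Fin N → ℝ) (hG : ∀ a b c, G a b c = G a c b) (i j m n : Fin N) :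
    curvA (fun a b c => G a b c - kron a b * r c - kron a c * r b)
        (fun a b c l => dG a b c l - kron a b * dr c l - kron a c * dr b l) i j m n
      = curvA G dG i j m n + kron i j * (dr n m - dr m n)
          + kron i m * psiA G r dr j n - kron i n * psiA G r dr j m := by
  unfold curvA psiA
  rw [show (∑ α : Fin N,
      ((G α j m - kron α j * r m - kron α m * r j) * (G i α n - kron i α * r n - kron i n * r α)
        - (G α j n - kron α j * r n - kron α n * r j) * (G i α m - kron i α * r m - kron i m * r α)))
    = ∑ α : Fin N,
      ((G α j m * G i α n - G α j n * G i α m)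
        - kron i α * (G α j m * r n) - kron i n * (G α j m * r α)
        - kron α j * (r m * G i α n)
        + kron α j * (kron i α * (r m * r n)) + kron α j * (kron i n * (r m * r α))
        - kron α m * (r j * G i α n)
        + kron α m * (kron i α * (r j * r n)) + kron α m * (kron i n * (r j * r α))
        + kron i α * (G α j n * r m) + kron i m * (G α j n * r α)
        + kron α j * (r n * G i α m)
        - kron α j * (kron i α * (r n * r m)) - kron α j * (kron i m * (r n * r α))
        + kron α n * (r j * G i α m)
        - kron α n * (kron i α * (r j * r m)) - kron α n * (kron i m * (r j * r α)))
    from Finset.sum_congr rfl fun α _ => by ring]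
  simp only [Finset.sum_add_distrib, Finset.sum_sub_distrib, sum_kron_l, sum_kron_r,
    ← Finset.mul_sum]
  rw [hG i m n]
  ring

lemma ric2 {N : ℕ} (G : Fin N → Fin N → Fin N → ℝ)
    (dG : Fin N → Fin N → Fin N → Fin N → ℝ) (r : Fin N → ℝ)
    (dr : Fin N → Fin N → ℝ) (hG : ∀ a b c, G a b c = G a c b) (j m : Fin N) :
    ricA (fun a b c => G a b c - kron a b * r c - kron a c * r b)
        (fun a b c l => dG a b c l - kron a b * dr c l - kron a c * dr b l) j m
      = ricA G dG j m + (dr j m - dr m j) - ((N:ℝ) - 1) * psiA G r dr j m := by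
  unfold ricA
  rw [Finset.sum_congr rfl fun α (_ : α ∈ Finset.univ) => curv2 G dG r dr hG α j m α]
  simp only [Finset.sum_add_distrib, Finset.sum_sub_distrib, sum_kron_l, sum_kron_diag]
  ring

end WeylAux

namespace WeylAux

lemma covA_zero {N : ℕ} (v : Fin N → Fin N → Fin N → ℝ) (i j k l : Fin N) :
    covA v (fun _ _ _ => (0:ℝ)) (fun _ _ _ _ => (0:ℝ)) i j k l = 0 := by
  simp [covA]

lemma stage2 {N : ℕ} (hN : 2 ≤ N) (G : Fin N → Fin N → Fin N → ℝ)
    (dG : Fin N → Fin N → Fin N → Fin N → ℝ) (r : Fin N → ℝ)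
    (dr : Fin N → Fin N → ℝ) (hG : ∀ a b c, G a b c = G a c b) (i j m n : Fin N) :
    weylA (fun a b c => G a b c - kron a b * r c - kron a c * r b)
        (fun a b c l => dG a b c l - kron a b * dr c l - kron a c * dr b l)
        (fun _ _ _ => (0:ℝ)) (fun _ _ _ _ => (0:ℝ)) i j m n
      = weylA G dG (fun _ _ _ => (0:ℝ)) (fun _ _ _ _ => (0:ℝ)) i j m n := by
  have h2 : (2:ℝ) ≤ (N:ℝ) := by exact_mod_cast hN
  have hn1 : ((N:ℝ) + 1) ≠ 0 := by nlinarith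
  have hn2 : ((N:ℝ)^2 - 1) ≠ 0 := by nlinarith
  unfold weylA
  simp only [covA_zero, mul_zero, zero_mul, sub_zero, zero_sub, sub_self, add_zero,
    zero_add, neg_zero, Finset.sum_const_zero]
  rw [curv2 G dG r dr hG i j m n, ric2 G dG r dr hG m n, ric2 G dG r dr hG n m,
    ric2 G dG r dr hG j n, ric2 G dG r dr hG j m, ric2 G dG r dr hG n j,
    ric2 G dG r dr hG m j]
  unfold psiA
  rw [show (∑ α : Fin N, G α n j * r α) = ∑ α : Fin N, G α j n * r α from
      Finset.sum_congr rfl fun α _ => by rw [hG α n j],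
    show (∑ α : Fin N, G α m j * r α) = ∑ α : Fin N, G α j m * r α from
      Finset.sum_congr rfl fun α _ => by rw [hG α m j],
    show (∑ α : Fin N, G α n m * r α) = ∑ α : Fin N, G α m n * r α from
      Finset.sum_congr rfl fun α _ => by rw [hG α n m]]
  field_simp
  ring

end WeylAux

namespace WeylAux

section Stage1
variable {N : ℕ} (s g : Fin N → Fin N → Fin N → ℝ)
  (ds dg : Fin N → Fin N → Fin N → Fin N → ℝ)

lemma curv1 (hs : ∀ a b c, s a b c = s a c b) (i j m n : Fin N) :
    curvA (fun a b c => s a b c - g a b c) (fun a b c l => ds a b c l - dg a b c l) i j m n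
      = curvA s ds i j m n - covA s g dg i j m n + covA s g dg i j n m
          + ∑ α : Fin N, (g α j m * g i α n - g α j n * g i α m) := by
  unfold curvA covA
  rw [show (∑ α : Fin N,
      ((s α j m - g α j m) * (s i α n - g i α n) - (s α j n - g α j n) * (s i α m - g i α m)))
    = ∑ α : Fin N,
      ((s α j m * s i α n - s α j n * s i α m)
        + (g α j m * g i α n - g α j n * g i α m)
        - s i α n * g α j m - s α j m * g i α n
        + s i α m * g α j n + s α j n * g i α m)
    from Finset.sum_congr rfl fun α _ => by ring]
  simp only [Finset.sum_add_distrib, Finset.sum_sub_distrib]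
  rw [show (∑ α : Fin N, s α n m * g i j α) = ∑ α : Fin N, s α m n * g i j α from
    Finset.sum_congr rfl fun α _ => by rw [hs α m n]]
  ring

lemma covA_sym (hg : ∀ a b c, g a b c = g a c b)
    (hdg : ∀ a b c l, dg a b c l = dg a c b l) (i j k l : Fin N) :
    covA s g dg i j k l = covA s g dg i k j l := by
  unfold covA
  rw [hdg i j k l,
    show (∑ α : Fin N, s i α l * g α j k) = ∑ α : Fin N, s i α l * g α k j from
      Finset.sum_congr rfl fun α _ => by rw [hg α j k],
    show (∑ α : Fin N, s α j l * g i α k) = ∑ α : Fin N, s α j l * g i k α from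
      Finset.sum_congr rfl fun α _ => by rw [hg i α k],
    show (∑ α : Fin N, s α k l * g i j α) = ∑ α : Fin N, s α k l * g i α j from
      Finset.sum_congr rfl fun α _ => by rw [hg i j α]]
  ring

lemma ric1 (hs : ∀ a b c, s a b c = s a c b) (hg : ∀ a b c, g a b c = g a c b)
    (hdg : ∀ a b c l, dg a b c l = dg a c b l) (j m : Fin N) :
    ricA (fun a b c => s a b c - g a b c) (fun a b c l => ds a b c l - dg a b c l) j m
      = ricA s ds j m - ∑ α : Fin N, covA s g dg α j m α
          + ∑ α : Fin N, covA s g dg α α j m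
          + ∑ α : Fin N, ∑ β : Fin N, (g β j m * g α β α - g β j α * g α β m) := by
  unfold ricA
  rw [Finset.sum_congr rfl fun α (_ : α ∈ Finset.univ) => curv1 s g ds dg hs α j m α]
  simp only [Finset.sum_add_distrib, Finset.sum_sub_distrib]
  rw [show (∑ α : Fin N, covA s g dg α j α m) = ∑ α : Fin N, covA s g dg α α j m from
    Finset.sum_congr rfl fun α _ => covA_sym s g dg hg hdg α j α m]

end Stage1

end WeylAux

namespace WeylAux

lemma stage1 {N : ℕ} (hN : 2 ≤ N) (s g : Fin N → Fin N → Fin N → ℝ)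
    (ds dg : Fin N → Fin N → Fin N → Fin N → ℝ)
    (hs : ∀ a b c, s a b c = s a c b) (hg : ∀ a b c, g a b c = g a c b)
    (hdg : ∀ a b c l, dg a b c l = dg a c b l) (i j m n : Fin N) :
    weylA s ds g dg i j m n
      = weylA (fun a b c => s a b c - g a b c) (fun a b c l => ds a b c l - dg a b c l)
          (fun _ _ _ => (0:ℝ)) (fun _ _ _ _ => (0:ℝ)) i j m n := by
  have h2 : (2:ℝ) ≤ (N:ℝ) := by exact_mod_cast hN
  have hn1 : ((N:ℝ) + 1) ≠ 0 := by nlinarith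
  have hn2 : ((N:ℝ)^2 - 1) ≠ 0 := by nlinarith
  unfold weylA
  simp only [covA_zero, mul_zero, zero_mul, sub_zero, zero_sub, sub_self, add_zero,
    zero_add, neg_zero, Finset.sum_const_zero]
  rw [curv1 s g ds dg hs i j m n,
    ric1 s g ds dg hs hg hdg m n, ric1 s g ds dg hs hg hdg n m,
    ric1 s g ds dg hs hg hdg j n, ric1 s g ds dg hs hg hdg j m,
    ric1 s g ds dg hs hg hdg n j, ric1 s g ds dg hs hg hdg m j]
  simp only [Finset.sum_sub_distrib]
  -- A-symmetry normalizations
  rw [show (∑ α : Fin N, covA s g dg α n m α) = ∑ α : Fin N, covA s g dg α m n α from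
      Finset.sum_congr rfl fun α _ => covA_sym s g dg hg hdg α n m α,
    show (∑ α : Fin N, covA s g dg α n j α) = ∑ α : Fin N, covA s g dg α j n α from
      Finset.sum_congr rfl fun α _ => covA_sym s g dg hg hdg α n j α,
    show (∑ α : Fin N, covA s g dg α m j α) = ∑ α : Fin N, covA s g dg α j m α from
      Finset.sum_congr rfl fun α _ => covA_sym s g dg hg hdg α m j α,
    show (∑ α : Fin N, covA s g dg α j α n) = ∑ α : Fin N, covA s g dg α α j n from
      Finset.sum_congr rfl fun α _ => covA_sym s g dg hg hdg α j α n,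
    show (∑ α : Fin N, covA s g dg α j α m) = ∑ α : Fin N, covA s g dg α α j m from
      Finset.sum_congr rfl fun α _ => covA_sym s g dg hg hdg α j α m]
  -- double-sum normalizations (ric1 doubles at swapped pairs -> canonical)
  rw [show (∑ α : Fin N, ∑ β : Fin N, g β n m * g α β α)
        = ∑ α : Fin N, ∑ β : Fin N, g β m n * g α β α from
      Finset.sum_congr rfl fun α _ => Finset.sum_congr rfl fun β _ => by rw [hg β m n],
    show (∑ α : Fin N, ∑ β : Fin N, g β n j * g α β α)
        = ∑ α : Fin N, ∑ β : Fin N, g β j n * g α β α from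
      Finset.sum_congr rfl fun α _ => Finset.sum_congr rfl fun β _ => by rw [hg β j n],
    show (∑ α : Fin N, ∑ β : Fin N, g β m j * g α β α)
        = ∑ α : Fin N, ∑ β : Fin N, g β j m * g α β α from
      Finset.sum_congr rfl fun α _ => Finset.sum_congr rfl fun β _ => by rw [hg β j m],
    show (∑ α : Fin N, ∑ β : Fin N, g β n α * g α β m)
        = ∑ α : Fin N, ∑ β : Fin N, g β m α * g α β n from by
      rw [Finset.sum_comm]
      exact Finset.sum_congr rfl fun α _ => Finset.sum_congr rfl fun β _ => by
        rw [hg α n β, hg β α m]; ring,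
    show (∑ α : Fin N, ∑ β : Fin N, g β n α * g α β j)
        = ∑ α : Fin N, ∑ β : Fin N, g β j α * g α β n from by
      rw [Finset.sum_comm]
      exact Finset.sum_congr rfl fun α _ => Finset.sum_congr rfl fun β _ => by
        rw [hg α n β, hg β α j]; ring,
    show (∑ α : Fin N, ∑ β : Fin N, g β m α * g α β j)
        = ∑ α : Fin N, ∑ β : Fin N, g β j α * g α β m from by
      rw [Finset.sum_comm]
      exact Finset.sum_congr rfl fun α _ => Finset.sum_congr rfl fun β _ => by
        rw [hg α m β, hg β α j]; ring]
  -- weylA-side doubles -> canonical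
  rw [show (∑ α : Fin N, ∑ β : Fin N, g α j n * g β α β)
        = ∑ α : Fin N, ∑ β : Fin N, g β j n * g α β α from Finset.sum_comm,
    show (∑ α : Fin N, ∑ β : Fin N, g α j m * g β α β)
        = ∑ α : Fin N, ∑ β : Fin N, g β j m * g α β α from Finset.sum_comm,
    show (∑ α : Fin N, ∑ β : Fin N, g α j β * g β n α)
        = ∑ α : Fin N, ∑ β : Fin N, g β j α * g α β n from by
      rw [Finset.sum_comm]
      exact Finset.sum_congr rfl fun α _ => Finset.sum_congr rfl fun β _ => by
        rw [hg α n β],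
    show (∑ α : Fin N, ∑ β : Fin N, g α j β * g β α m)
        = ∑ α : Fin N, ∑ β : Fin N, g β j α * g α β m from Finset.sum_comm]
  field_simp
  ring

end WeylAux
namespace WeylAux

lemma pd_sub {N : ℕ} {x : Pt N} (l : Fin N) {f g : Pt N → ℝ}
    (hf : DifferentiableAt ℝ f x) (hg : DifferentiableAt ℝ g x) :
    pd l (fun y => f y - g y) x = pd l f x - pd l g x := by
  unfold pd
  rw [fderiv_fun_sub hf hg]
  simp

lemma pd_cmul {N : ℕ} {x : Pt N} (l : Fin N) {f : Pt N → ℝ} (c : ℝ)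
    (hf : DifferentiableAt ℝ f x) :
    pd l (fun y => c * f y) x = c * pd l f x := by
  unfold pd
  rw [fderiv_const_mul hf]
  simp

lemma pd_comb {N : ℕ} {x : Pt N} (l : Fin N) {f1 f2 f3 f4 : Pt N → ℝ} (c1 c2 : ℝ)
    (h1 : DifferentiableAt ℝ f1 x) (h2 : DifferentiableAt ℝ f2 x)
    (h3 : DifferentiableAt ℝ f3 x) (h4 : DifferentiableAt ℝ f4 x) :
    pd l (fun y => f1 y - f2 y - c1 * f3 y - c2 * f4 y) x
      = pd l f1 x - pd l f2 x - c1 * pd l f3 x - c2 * pd l f4 x := by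
  rw [pd_sub l (((h1.fun_sub h2).fun_sub (h3.const_mul c1))) (h4.const_mul c2),
    pd_sub l (h1.fun_sub h2) (h3.const_mul c1), pd_sub l h1 h2,
    pd_cmul l c1 h3, pd_cmul l c2 h4]

lemma pd_congr {N : ℕ} {x : Pt N} (l : Fin N) {f g : Pt N → ℝ}
    (h : f =ᶠ[nhds x] g) : pd l f x = pd l g x := by
  unfold pd
  rw [h.fderiv_eq]

end WeylAux

open WeylAux in
/-- the derived associated invariant of the Weyl type (Corollary 2.1). -/
theorem weyl_type_derived
    {N : ℕ} (hN : 2 ≤ N) (U : Set (Pt N)) (hU : IsOpen U)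
    (L Lb σ σb : Conn N) (ρ ρb : Fin N → Pt N → ℝ)
    (hL : SmoothConn U L) (hLb : SmoothConn U Lb)
    (hσ : SmoothConn U σ) (hσb : SmoothConn U σb)
    (hρ : ∀ j, ContDiffOn ℝ (⊤ : ℕ∞) (ρ j) U) (hρb : ∀ j, ContDiffOn ℝ (⊤ : ℕ∞) (ρb j) U)
    (hσsym : ∀ i j k x, σ i j k x = σ i k j x)
    (hσbsym : ∀ i j k x, σb i j k x = σb i k j x)
    (hP : ∀ i j k, ∀ x ∈ U,
      symC (fun a b c y => Lb a b c y - L a b c y) i j k x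
        = (kron i j * ρb k x + kron i k * ρb j x + σb i j k x)
          - (kron i j * ρ k x + kron i k * ρ j x + σ i j k x)) :
    ∀ i j m n, ∀ x ∈ U,
      weylDer Lb σb i j m n x = weylDer L σ i j m n x := by
  intro i j m n x hx
  have hUx : U ∈ nhds x := hU.mem_nhds hx
  have diffC : ∀ (M : Conn N), SmoothConn U M → ∀ a b c,
      DifferentiableAt ℝ (M a b c) x := fun M hM a b c =>
    ((hM a b c).contDiffAt hUx).differentiableAt (by simp)
  have diffS : ∀ (M : Conn N), SmoothConn U M → ∀ a b c,
      DifferentiableAt ℝ (symC M a b c) x := fun M hM a b c =>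
    ((diffC M hM a b c).add (diffC M hM a c b)).const_mul _
  have diffR : ∀ (τ : Fin N → Pt N → ℝ), (∀ j, ContDiffOn ℝ (⊤ : ℕ∞) (τ j) U) → ∀ a,
      DifferentiableAt ℝ (τ a) x := fun τ hτ a =>
    ((hτ a).contDiffAt hUx).differentiableAt (by simp)
  -- the common deformed connection values
  have hkey : ∀ a b c, ∀ y ∈ U,
      symC Lb a b c y - σb a b c y - kron a b * ρb c y - kron a c * ρb b y
        = symC L a b c y - σ a b c y - kron a b * ρ c y - kron a c * ρ b y := by
    intro a b c y hy
    have h := hP a b c y hy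
    simp only [symC] at h ⊢
    linear_combination h
  -- symmetry facts
  have hsymS : ∀ (M : Conn N) a b c, symC M a b c x = symC M a c b x := by
    intro M a b c; simp only [symC]; ring
  have hv : (fun a b c => symC Lb a b c x - σb a b c x - kron a b * ρb c x
        - kron a c * ρb b x)
      = (fun a b c => symC L a b c x - σ a b c x - kron a b * ρ c x
        - kron a c * ρ b x) := by
    funext a b c
    exact hkey a b c x hx
  have hd : (fun a b c l => pd l (symC Lb a b c) x - pd l (σb a b c) x
        - kron a b * pd l (ρb c) x - kron a c * pd l (ρb b) x)
      = (fun a b c l => pd l (symC L a b c) x - pd l (σ a b c) x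
        - kron a b * pd l (ρ c) x - kron a c * pd l (ρ b) x) := by
    funext a b c l
    rw [← pd_comb l (kron a b) (kron a c) (diffS Lb hLb a b c) (diffC σb hσb a b c)
        (diffR ρb hρb c) (diffR ρb hρb b),
      ← pd_comb l (kron a b) (kron a c) (diffS L hL a b c) (diffC σ hσ a b c)
        (diffR ρ hρ c) (diffR ρ hρ b)]
    exact pd_congr l (Filter.eventuallyEq_of_mem hUx fun y hy => hkey a b c y hy)
  calc weylDer Lb σb i j m n x
      = weylA (fun a b c => symC Lb a b c x) (fun a b c l => pd l (symC Lb a b c) x)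
          (fun a b c => σb a b c x) (fun a b c l => pd l (σb a b c) x) i j m n :=
        weylDer_eq_weylA Lb σb i j m n x
    _ = weylA (fun a b c => symC Lb a b c x - σb a b c x)
          (fun a b c l => pd l (symC Lb a b c) x - pd l (σb a b c) x)
          (fun _ _ _ => (0:ℝ)) (fun _ _ _ _ => (0:ℝ)) i j m n :=
        stage1 hN (fun a b c => symC Lb a b c x) (fun a b c => σb a b c x)
          (fun a b c l => pd l (symC Lb a b c) x) (fun a b c l => pd l (σb a b c) x)
          (fun a b c => hsymS Lb a b c) (fun a b c => hσbsym a b c x)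
          (fun a b c l => by
            show pd l (σb a b c) x = pd l (σb a c b) x
            rw [show σb a b c = σb a c b from funext fun y => hσbsym a b c y]) i j m n
    _ = weylA (fun a b c => symC Lb a b c x - σb a b c x - kron a b * ρb c x
          - kron a c * ρb b x)
          (fun a b c l => pd l (symC Lb a b c) x - pd l (σb a b c) x
            - kron a b * pd l (ρb c) x - kron a c * pd l (ρb b) x)
          (fun _ _ _ => (0:ℝ)) (fun _ _ _ _ => (0:ℝ)) i j m n :=
        (stage2 hN (fun a b c => symC Lb a b c x - σb a b c x)
          (fun a b c l => pd l (symC Lb a b c) x - pd l (σb a b c) x)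
          (fun a => ρb a x) (fun a l => pd l (ρb a) x)
          (fun a b c => by
            show symC Lb a b c x - σb a b c x = symC Lb a c b x - σb a c b x
            rw [hsymS Lb a b c, hσbsym a b c x]) i j m n).symm
    _ = weylA (fun a b c => symC L a b c x - σ a b c x - kron a b * ρ c x
          - kron a c * ρ b x)
          (fun a b c l => pd l (symC L a b c) x - pd l (σ a b c) x
            - kron a b * pd l (ρ c) x - kron a c * pd l (ρ b) x)
          (fun _ _ _ => (0:ℝ)) (fun _ _ _ _ => (0:ℝ)) i j m n := by rw [hv, hd]
    _ = weylA (fun a b c => symC L a b c x - σ a b c x)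
          (fun a b c l => pd l (symC L a b c) x - pd l (σ a b c) x)
          (fun _ _ _ => (0:ℝ)) (fun _ _ _ _ => (0:ℝ)) i j m n :=
        stage2 hN (fun a b c => symC L a b c x - σ a b c x)
          (fun a b c l => pd l (symC L a b c) x - pd l (σ a b c) x)
          (fun a => ρ a x) (fun a l => pd l (ρ a) x)
          (fun a b c => by
            show symC L a b c x - σ a b c x = symC L a c b x - σ a c b x
            rw [hsymS L a b c, hσsym a b c x]) i j m n
    _ = weylA (fun a b c => symC L a b c x) (fun a b c l => pd l (symC L a b c) x)
          (fun a b c => σ a b c x) (fun a b c l => pd l (σ a b c) x) i j m n :=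
        (stage1 hN (fun a b c => symC L a b c x) (fun a b c => σ a b c x)
          (fun a b c l => pd l (symC L a b c) x) (fun a b c l => pd l (σ a b c) x)
          (fun a b c => hsymS L a b c) (fun a b c => hσsym a b c x)
          (fun a b c l => by
            show pd l (σ a b c) x = pd l (σ a c b) x
            rw [show σ a b c = σ a c b from funext fun y => hσsym a b c y]) i j m n).symm
    _ = weylDer L σ i j m n x := (weylDer_eq_weylA L σ i j m n x).symm
end

section
/- Suppose P^i_{(jk)} = ω̄^i_{jk} − ω^i_{jk} with ω, ω̄ smooth and symmetric in j, k, and P^i_{[jk]} = τ̄^i_{jk} − τ^i_{jk} with τ, τ̄ smooth and anti-symmetric in j, k. Set ω_{(1)}^i_{jk} := L^i_{(jk)} and ω_{(2)}^i_{jk} := ω^i_{jk} (and barred analogues ω̄_{(1)} := L̄^i_{(jk)}, ω̄_{(2)} := ω̄^i_{jk}), and T̂^i_{jk} := L^i_{[jk]} − τ^i_{jk} (barred analogue T̂̄^i_{jk} := L̄^i_{[jk]} − τ̄^i_{jk}). Then for every choice q₁, q₂, q₃ ∈ {1, 2} the geometrical object Φ^i_{jmn} := L^i_{[jm]|n} −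 τ^i_{jm|n} − Σ_α ω_{(q₁)}^i_{αn} T̂^α_{jm} + Σ_α ω_{(q₂)}^α_{jn} T̂^i_{αm} + Σ_α ω_{(q₃)}^α_{mn} T̂^i_{jα} is an invariant of the mapping: the object defined by the same formula from L̄, τ̄, the barred ω_{(q)} and the covariant derivative ‖ coincides with Φ^i_{jmn} on U (the transformation rule (2.22) in invariant form). -/
open scoped BigOperators

/-- selector `ω_{(q)}` for `q ∈ {1,2}`: `ω_{(1)} = L^i_{(jk)}`, `ω_{(2)} = ω`. -/
noncomputable def omSel {N : ℕ} (L ω : Conn N) (q : ℕ) : Conn N :=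
  if q = 1 then symC L else ω

/-- selector `ω_{(p)}` for `p ∈ {1,2,3}`. -/
noncomputable def omSel3 {N : ℕ} (L ω ω3 : Conn N) (p : ℕ) : Conn N :=
  if p = 1 then symC L else if p = 2 then ω else ω3

/-- `T̂^i_{jk} := L^i_{[jk]} - τ^i_{jk}` -/
noncomputable def thatC {N : ℕ} (L τ : Conn N) : Conn N :=
  fun i j k x => torC L i j k x - τ i j k x

/-- `W̃_{(p)}^i_{jmn}` built from `L` and a symmetric family `ωp`. -/
noncomputable def weylTilde {N : ℕ} (L ωp : Conn N) (i j m n : Fin N) (x : Pt N) : ℝ :=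
  curv L i j m n x - covD L ωp i j m n x + covD L ωp i j n m x
    + ∑ α : Fin N, (ωp α j m x * ωp i α n x - ωp α j n x * ωp i α m x)
/-- the transformation rule (2.22) in invariant form. -/
theorem transformation_rule_2_22_invariant
    {N : ℕ} (hN : 2 ≤ N) (U : Set (Pt N)) (hU : IsOpen U)
    (L Lb ω ωb τ τb : Conn N)
    (hL : SmoothConn U L) (hLb : SmoothConn U Lb)
    (hω : SmoothConn U ω) (hωb : SmoothConn U ωb)
    (hτ : SmoothConn U τ) (hτb : SmoothConn U τb)
    (hωsym : ∀ i j k x, ω i j k x = ω i k j x)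
    (hωbsym : ∀ i j k x, ωb i j k x = ωb i k j x)
    (hτasym : ∀ i j k x, τ i j k x = -τ i k j x)
    (hτbasym : ∀ i j k x, τb i j k x = -τb i k j x)
    (hPsym : ∀ i j k, ∀ x ∈ U,
      symC (fun a b c y => Lb a b c y - L a b c y) i j k x = ωb i j k x - ω i j k x)
    (hPasym : ∀ i j k, ∀ x ∈ U,
      torC (fun a b c y => Lb a b c y - L a b c y) i j k x = τb i j k x - τ i j k x)
    (q₁ q₂ q₃ : ℕ)
    (hq₁ : q₁ ∈ ({1, 2} : Set ℕ)) (hq₂ : q₂ ∈ ({1, 2} : Set ℕ))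
    (hq₃ : q₃ ∈ ({1, 2} : Set ℕ)) :
    ∀ i j m n, ∀ x ∈ U,
      covD Lb (torC Lb) i j m n x - covD Lb τb i j m n x
        - ∑ α : Fin N, omSel Lb ωb q₁ i α n x * thatC Lb τb α j m x
        + ∑ α : Fin N, omSel Lb ωb q₂ α j n x * thatC Lb τb i α m x
        + ∑ α : Fin N, omSel Lb ωb q₃ α m n x * thatC Lb τb i j α x
      = covD L (torC L) i j m n x - covD L τ i j m n x
        - ∑ α : Fin N, omSel L ω q₁ i α n x * thatC L τ α j m x
        + ∑ α : Fin N, omSel L ω q₂ α j n x * thatC L τ i α m x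
        + ∑ α : Fin N, omSel L ω q₃ α m n x * thatC L τ i j α x := by
  intro i j m n x hx
  have hmem : U ∈ nhds x := hU.mem_nhds hx
  have hdiff : ∀ (M : Conn N), SmoothConn U M → ∀ a b c : Fin N,
      DifferentiableAt ℝ (M a b c) x := fun M hM a b c =>
    ((hM a b c).contDiffAt hmem).differentiableAt (by simp)
  have hThat : ∀ a b c : Fin N, ∀ y ∈ U, thatC Lb τb a b c y = thatC L τ a b c y := by
    intro a b c y hy
    have h := hPasym a b c y hy
    simp only [torC, thatC] at *
    linarith
  have hSym : ∀ a b c : Fin N,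
      symC Lb a b c x = symC L a b c x + (ωb a b c x - ω a b c x) := by
    intro a b c
    have h := hPsym a b c x hx
    simp only [symC] at *
    linarith
  have hOm : ∀ q, q ∈ ({1, 2} : Set ℕ) → ∀ a b c : Fin N,
      omSel Lb ωb q a b c x = omSel L ω q a b c x + (ωb a b c x - ω a b c x) := by
    intro q hq a b c
    rcases hq with h1 | h2
    · subst h1; simpa [omSel] using hSym a b c
    · simp only [Set.mem_singleton_iff] at h2
      subst h2
      norm_num [omSel]
  have hpd : pd n (thatC Lb τb i j m) x = pd n (thatC L τ i j m) x := by
    unfold pd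
    congr 1
    apply Filter.EventuallyEq.fderiv_eq
    filter_upwards [hmem] with y hy using hThat i j m y hy
  have hsplit : ∀ (M T : Conn N), SmoothConn U M → SmoothConn U T →
      pd n (torC M i j m) x - pd n (T i j m) x = pd n (thatC M T i j m) x := by
    intro M T hM hT
    have h1 : DifferentiableAt ℝ (torC M i j m) x := by
      have d1 := hdiff M hM i j m
      have d2 := hdiff M hM i m j
      unfold torC
      exact ((d1.sub d2).const_mul _)
    have h2 : DifferentiableAt ℝ (T i j m) x := hdiff T hT i j m
    unfold pd thatC
    rw [fderiv_fun_sub h1 h2]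
    simp
  have expand : ∀ (M T W : Conn N), SmoothConn U M → SmoothConn U T →
      (covD M (torC M) i j m n x - covD M T i j m n x
        - ∑ α : Fin N, omSel M W q₁ i α n x * thatC M T α j m x
        + ∑ α : Fin N, omSel M W q₂ α j n x * thatC M T i α m x
        + ∑ α : Fin N, omSel M W q₃ α m n x * thatC M T i j α x)
      = pd n (thatC M T i j m) x
        + ∑ α : Fin N, (symC M i α n x * thatC M T α j m x
            - symC M α j n x * thatC M T i α m x
            - symC M α m n x * thatC M T i j α x
            - omSel M W q₁ i α n x * thatC M T α j m x
            + omSel M W q₂ α j n x * thatC M T i α m x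
            + omSel M W q₃ α m n x * thatC M T i j α x) := by
    intro M T W hM hT
    rw [← hsplit M T hM hT]
    simp only [covD, thatC, mul_sub, Finset.sum_sub_distrib, Finset.sum_add_distrib]
    ring
  rw [expand Lb τb ωb hLb hτb, expand L τ ω hL hτ, hpd]
  congr 1
  apply Finset.sum_congr rfl
  intro α _
  rw [hThat α j m x hx, hThat i α m x hx, hThat i j α x hx,
    hSym i α n, hSym α j n, hSym α m n,
    hOm q₁ hq₁ i α n, hOm q₂ hq₂ α j n, hOm q₃ hq₃ α m n]
  ring
end

section
/- Suppose P^i_{jk} = (ω̄^i_{jk} − ω^i_{jk}) + (τ̄^i_{jk} − τ^i_{jk}) with ω, ω̄ smooth and symmetric in j, k and τ, τ̄ smooth and anti-symmetric in j, k. Set ω_{(1)}^i_{jk} := L^i_{(jk)}, ω_{(2)}^i_{jk} := ω^i_{jk}, ω_{(3)}^i_{jk} := −(1/2) P^i_{(jk)}, with barred analogues ω̄_{(1)} := L̄^i_{(jk)}, ω̄_{(2)} := ω̄^i_{jk}, ω̄_{(3)} := +(1/2) P^i_{(jk)}, and T̂^i_{jk} := L^i_{[jk]} − τ^i_{jk}.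 For p ∈ {1,2,3} set W̃_{(p)}^i_{jmn} := R^i_{jmn} − ω_{(p)}^i_{jm|n} + ω_{(p)}^i_{jn|m} + Σ_α (ω_{(p)}^α_{jm} ω_{(p)}^i_{αn} − ω_{(p)}^α_{jn} ω_{(p)}^i_{αm}). Then for all real numbers u, u', v, v', w, every p ∈ {1,2,3} and all choices q₁, q₂, q₃, r₁, r₂, r₃ ∈ {1,2}, the geometrical object W^i_{jmn} := W̃_{(p)}^i_{jmn} + u [ L^i_{[jm]|n} − τ^i_{jm|n} − Σ_α ω_{(q₁)}^i_{αn} T̂^α_{jm} + Σ_α ω_{(q₂)}^α_{jn} T̂^i_{αm} + Σ_α ω_{(q₃)}^α_{mn} T̂^i_{jα} ] + u' [ L^i_{[jn]|m} − τ^i_{jn|m} − Σ_α ω_{(r₁)}^i_{αm} T̂^α_{jn} + Σ_α ω_{(r₂)}^α_{jm} T̂^i_{αn} + Σ_α ω_{(r₃)}^α_{mn} T̂^i_{jα} ] + v Σ_α T̂^α_{jm} T̂^i_{αn} + v' Σ_α T̂^α_{jn} T̂^i_{αm} + w Σ_α T̂^α_{mn} T̂^i_{αj} is an invariant of the mapping: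 the object defined by the same formula from the barred data (L̄, ω̄, τ̄, R̄, ‖, barred ω_{(p)}, barred T̂) coincides with W^i_{jmn} on U (Theorem 2.1: the family of invariants of the Weyl type). -/
open scoped BigOperators

/-- The general Weyl-type invariant `W^i_{jmn}` of Theorem 2.1. -/
noncomputable def bigW {N : ℕ} (L τ ωp ωq1 ωq2 ωq3 ωr1 ωr2 ωr3 : Conn N)
    (u u' v v' w : ℝ) (i j m n : Fin N) (x : Pt N) : ℝ :=
  weylTilde L ωp i j m n x
  + u * (covD L (torC L) i j m n x - covD L τ i j m n x
      - ∑ α : Fin N, ωq1 i α n x * thatC L τ α j m x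
      + ∑ α : Fin N, ωq2 α j n x * thatC L τ i α m x
      + ∑ α : Fin N, ωq3 α m n x * thatC L τ i j α x)
  + u' * (covD L (torC L) i j n m x - covD L τ i j n m x
      - ∑ α : Fin N, ωr1 i α m x * thatC L τ α j n x
      + ∑ α : Fin N, ωr2 α j m x * thatC L τ i α n x
      + ∑ α : Fin N, ωr3 α m n x * thatC L τ i j α x)
  + v * ∑ α : Fin N, thatC L τ α j m x * thatC L τ i α n x
  + v' * ∑ α : Fin N, thatC L τ α j n x * thatC L τ i α m x
  + w * ∑ α : Fin N, thatC L τ α m n x * thatC L τ i α j x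

/-- If two functions agree on an open set, their partial derivatives agree there. -/
lemma pd_congr' {N : ℕ} {U : Set (Pt N)} (hU : IsOpen U) {x : Pt N} (hx : x ∈ U)
    {f g : Pt N → ℝ} (h : ∀ y ∈ U, f y = g y) (l : Fin N) : pd l f x = pd l g x := by
  unfold pd
  rw [Filter.EventuallyEq.fderiv_eq (Filter.eventuallyEq_of_mem (hU.mem_nhds hx) h)]

/-- Partial derivative of a function that equals `g + h₁ - h₂` on an open set. -/
lemma pd_comb {N : ℕ} {U : Set (Pt N)} (hU : IsOpen U) {x : Pt N} (hx : x ∈ U)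
    {f g h₁ h₂ : Pt N → ℝ} (heq : ∀ y ∈ U, f y = g y + h₁ y - h₂ y)
    (dg : DifferentiableAt ℝ g x) (d1 : DifferentiableAt ℝ h₁ x)
    (d2 : DifferentiableAt ℝ h₂ x) (l : Fin N) :
    pd l f x = pd l g x + pd l h₁ x - pd l h₂ x := by
  rw [pd_congr' hU hx heq l]
  unfold pd
  rw [fderiv_fun_sub (dg.fun_add d1) d2, fderiv_fun_add dg d1]
  simp

set_option maxHeartbeats 4000000 in
/-- Theorem 2.1, the family of invariants of the Weyl type. -/
theorem weyl_type_general_invariants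
    {N : ℕ} (hN : 2 ≤ N) (U : Set (Pt N)) (hU : IsOpen U)
    (L Lb ω ωb τ τb : Conn N)
    (hL : SmoothConn U L) (hLb : SmoothConn U Lb)
    (hω : SmoothConn U ω) (hωb : SmoothConn U ωb)
    (hτ : SmoothConn U τ) (hτb : SmoothConn U τb)
    (hωsym : ∀ i j k x, ω i j k x = ω i k j x)
    (hωbsym : ∀ i j k x, ωb i j k x = ωb i k j x)
    (hτasym : ∀ i j k x, τ i j k x = -τ i k j x)
    (hτbasym : ∀ i j k x, τb i j k x = -τb i k j x)
    (hP : ∀ i j k, ∀ x ∈ U,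
      Lb i j k x - L i j k x
        = (ωb i j k x - ω i j k x) + (τb i j k x - τ i j k x))
    (u u' v v' w : ℝ) (p q₁ q₂ q₃ r₁ r₂ r₃ : ℕ)
    (hp : p ∈ ({1, 2, 3} : Set ℕ))
    (hq₁ : q₁ ∈ ({1, 2} : Set ℕ)) (hq₂ : q₂ ∈ ({1, 2} : Set ℕ))
    (hq₃ : q₃ ∈ ({1, 2} : Set ℕ))
    (hr₁ : r₁ ∈ ({1, 2} : Set ℕ)) (hr₂ : r₂ ∈ ({1, 2} : Set ℕ))
    (hr₃ : r₃ ∈ ({1, 2} : Set ℕ)) :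
    ∀ i j m n, ∀ x ∈ U,
      bigW Lb τb
        (omSel3 Lb ωb
          (fun a b c y => (1/2) * symC (fun e f g z => Lb e f g z - L e f g z) a b c y) p)
        (omSel Lb ωb q₁) (omSel Lb ωb q₂) (omSel Lb ωb q₃)
        (omSel Lb ωb r₁) (omSel Lb ωb r₂) (omSel Lb ωb r₃)
        u u' v v' w i j m n x
      = bigW L τ
          (omSel3 L ω
            (fun a b c y => -((1/2) * symC (fun e f g z => Lb e f g z - L e f g z) a b c y)) p)
          (omSel L ω q₁) (omSel L ω q₂) (omSel L ω q₃)
          (omSel L ω r₁) (omSel L ω r₂) (omSel L ω r₃)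
          u u' v v' w i j m n x := by
  intro i j m n x hx
  simp only [Set.mem_insert_iff, Set.mem_singleton_iff] at hp hq₁ hq₂ hq₃ hr₁ hr₂ hr₃
  -- differentiability of all basic families at x
  have dAt : ∀ (M : Conn N), SmoothConn U M → ∀ a b c, DifferentiableAt ℝ (M a b c) x :=
    fun M hM a b c => ((hM a b c).differentiableOn (by simp)).differentiableAt (hU.mem_nhds hx)
  have dL := dAt L hL
  have dLb := dAt Lb hLb
  have dω := dAt ω hω
  have dωb := dAt ωb hωb
  have dτ := dAt τ hτ
  have dτb := dAt τb hτb
  have dsymL : ∀ a b c, DifferentiableAt ℝ (symC L a b c) x :=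
    fun a b c => ((dL a b c).add (dL a c b)).const_mul (1/2)
  have dtorL : ∀ a b c, DifferentiableAt ℝ (torC L a b c) x :=
    fun a b c => ((dL a b c).sub (dL a c b)).const_mul (1/2)
  -- pointwise transformation laws on U
  have hsym : ∀ a b c, ∀ y ∈ U,
      symC Lb a b c y = symC L a b c y + (ωb a b c y - ω a b c y) := by
    intro a b c y hy
    have h1 := hP a b c y hy
    have h2 := hP a c b y hy
    have e1 := hωsym a b c y
    have e2 := hωbsym a b c y
    have e3 := hτasym a b c y
    have e4 := hτbasym a b c y
    simp only [symC]
    linarith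
  have htor : ∀ a b c, ∀ y ∈ U,
      torC Lb a b c y = torC L a b c y + τb a b c y - τ a b c y := by
    intro a b c y hy
    have h1 := hP a b c y hy
    have h2 := hP a c b y hy
    have e1 := hωsym a b c y
    have e2 := hωbsym a b c y
    have e3 := hτasym a b c y
    have e4 := hτbasym a b c y
    simp only [torC]
    linarith
  have hom3 : ∀ a b c, ∀ y ∈ U,
      omSel3 Lb ωb
        (fun a b c y => (1/2) * symC (fun e f g z => Lb e f g z - L e f g z) a b c y) p a b c y
      = omSel3 L ω
          (fun a b c y => -((1/2) * symC (fun e f g z => Lb e f g z - L e f g z) a b c y)) p a b c y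
        + (ωb a b c y - ω a b c y) := by
    intro a b c y hy
    rcases hp with rfl | rfl | rfl
    · simpa [omSel3] using hsym a b c y hy
    · simp only [omSel3]
      norm_num
    · simp only [omSel3]
      norm_num
      have h1 := hP a b c y hy
      have h2 := hP a c b y hy
      have e1 := hωsym a b c y
      have e2 := hωbsym a b c y
      have e3 := hτasym a b c y
      have e4 := hτbasym a b c y
      simp only [symC]
      linarith
  have homq : ∀ q, q = 1 ∨ q = 2 → ∀ a b c, ∀ y ∈ U,
      omSel Lb ωb q a b c y = omSel L ω q a b c y + (ωb a b c y - ω a b c y) := by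
    intro q hq a b c y hy
    rcases hq with rfl | rfl
    · simpa [omSel] using hsym a b c y hy
    · simp [omSel]
  have dom3 : ∀ a b c, DifferentiableAt ℝ
      (omSel3 L ω
        (fun a b c y => -((1/2) * symC (fun e f g z => Lb e f g z - L e f g z) a b c y)) p a b c) x := by
    intro a b c
    rcases hp with rfl | rfl | rfl
    · exact dsymL a b c
    · exact dω a b c
    · exact (((((dLb a b c).sub (dL a b c)).add ((dLb a c b).sub (dL a c b))).const_mul
        (1/2)).const_mul (1/2)).neg
  -- derivative transformation laws at x
  have E1 : ∀ a b c l, pd l (symC Lb a b c) x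
      = pd l (symC L a b c) x + pd l (ωb a b c) x - pd l (ω a b c) x := by
    intro a b c l
    refine pd_comb hU hx (fun y hy => ?_) (dsymL a b c) (dωb a b c) (dω a b c) l
    have := hsym a b c y hy
    linarith
  have E2 : ∀ a b c l,
      pd l (omSel3 Lb ωb
        (fun a b c y => (1/2) * symC (fun e f g z => Lb e f g z - L e f g z) a b c y) p a b c) x
      = pd l (omSel3 L ω
          (fun a b c y => -((1/2) * symC (fun e f g z => Lb e f g z - L e f g z) a b c y)) p a b c) x
        + pd l (ωb a b c) x - pd l (ω a b c) x := by
    intro a b c l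
    refine pd_comb hU hx (fun y hy => ?_) (dom3 a b c) (dωb a b c) (dω a b c) l
    have := hom3 a b c y hy
    linarith
  have E3 : ∀ a b c l, pd l (torC Lb a b c) x
      = pd l (torC L a b c) x + pd l (τb a b c) x - pd l (τ a b c) x := by
    intro a b c l
    exact pd_comb hU hx (htor a b c) (dtorL a b c) (dτb a b c) (dτ a b c) l
  -- pointwise versions at x
  have hsymx : ∀ a b c, symC Lb a b c x = symC L a b c x + (ωb a b c x - ω a b c x) :=
    fun a b c => hsym a b c x hx
  have htorx : ∀ a b c, torC Lb a b c x = torC L a b c x + τb a b c x - τ a b c x :=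
    fun a b c => htor a b c x hx
  have hom3x : ∀ a b c,
      omSel3 Lb ωb
        (fun a b c y => (1/2) * symC (fun e f g z => Lb e f g z - L e f g z) a b c y) p a b c x
      = omSel3 L ω
          (fun a b c y => -((1/2) * symC (fun e f g z => Lb e f g z - L e f g z) a b c y)) p a b c x
        + (ωb a b c x - ω a b c x) := fun a b c => hom3 a b c x hx
  have hq1x : ∀ a b c, omSel Lb ωb q₁ a b c x
      = omSel L ω q₁ a b c x + (ωb a b c x - ω a b c x) := fun a b c => homq q₁ hq₁ a b c x hx
  have hq2x : ∀ a b c, omSel Lb ωb q₂ a b c x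
      = omSel L ω q₂ a b c x + (ωb a b c x - ω a b c x) := fun a b c => homq q₂ hq₂ a b c x hx
  have hq3x : ∀ a b c, omSel Lb ωb q₃ a b c x
      = omSel L ω q₃ a b c x + (ωb a b c x - ω a b c x) := fun a b c => homq q₃ hq₃ a b c x hx
  have hr1x : ∀ a b c, omSel Lb ωb r₁ a b c x
      = omSel L ω r₁ a b c x + (ωb a b c x - ω a b c x) := fun a b c => homq r₁ hr₁ a b c x hx
  have hr2x : ∀ a b c, omSel Lb ωb r₂ a b c x
      = omSel L ω r₂ a b c x + (ωb a b c x - ω a b c x) := fun a b c => homq r₂ hr₂ a b c x hx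
  have hr3x : ∀ a b c, omSel Lb ωb r₃ a b c x
      = omSel L ω r₃ a b c x + (ωb a b c x - ω a b c x) := fun a b c => homq r₃ hr₃ a b c x hx
  have hsnm : ∀ a, symC L a n m x = symC L a m n x := by
    intro a
    simp only [symC]
    ring
  have hwnm : ∀ a, ω a n m x = ω a m n x := fun a => hωsym a n m x
  have hwbnm : ∀ a, ωb a n m x = ωb a m n x := fun a => hωbsym a n m x
  set O3b := omSel3 Lb ωb
    (fun a b c y => (1/2) * symC (fun e f g z => Lb e f g z - L e f g z) a b c y) p with hO3b
  set O3 := omSel3 L ω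
    (fun a b c y => -((1/2) * symC (fun e f g z => Lb e f g z - L e f g z) a b c y)) p with hO3
  simp only [bigW, weylTilde, curv, covD, thatC]
  rw [E1 i j m n, E1 i j n m, E2 i j m n, E2 i j n m, E3 i j m n, E3 i j n m]
  simp only [hsymx, htorx, hom3x, hq1x, hq2x, hq3x, hr1x, hr2x, hr3x, hsnm, hwnm, hwbnm]
  simp only [mul_add, add_mul, mul_sub, sub_mul, Finset.sum_add_distrib,
    Finset.sum_sub_distrib]
  simp only [mul_comm]
  ring_nf
end

section
/- Suppose there is a smooth family ψ_j : U → ℝ such that the symmetric part of the deformation tensor satisfies P^i_{(jk)} = ψ_j δ^i_k + ψ_k δ^i_j on U for all i, j, k (a geodesic mapping). Then the Thomas projective parameter T^i_{jk} := L^i_{(jk)} − (1/(N+1)) (δ^i_j Σ_α L^α_{(kα)} + δ^i_k Σ_α L^α_{(jα)}) is an invariant of the mapping: L̄^i_{(jk)} − (1/(N+1)) (δ^i_j Σ_α L̄^α_{(kα)} + δ^i_k Σ_α L̄^α_{(jα)}) = T^i_{jk} on U for all i, j, k. -/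
open scoped BigOperators

/-- the Thomas projective parameter is an invariant of a geodesic mapping. -/
theorem thomas_projective_parameter_invariant
    {N : ℕ} (hN : 2 ≤ N) (U : Set (Pt N)) (hU : IsOpen U)
    (L Lb : Conn N) (ψ : Fin N → Pt N → ℝ)
    (hL : SmoothConn U L) (hLb : SmoothConn U Lb)
    (hψ : ∀ j, ContDiffOn ℝ (⊤ : ℕ∞) (ψ j) U)
    (hgeo : ∀ i j k, ∀ x ∈ U,
      symC (fun a b c y => Lb a b c y - L a b c y) i j k x
        = ψ j x * kron i k + ψ k x * kron i j) :
    ∀ i j k, ∀ x ∈ U,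
      symC Lb i j k x - (1/((N:ℝ)+1)) *
          (kron i j * (∑ α : Fin N, symC Lb α k α x)
            + kron i k * (∑ α : Fin N, symC Lb α j α x))
      = symC L i j k x - (1/((N:ℝ)+1)) *
          (kron i j * (∑ α : Fin N, symC L α k α x)
            + kron i k * (∑ α : Fin N, symC L α j α x)) := by
  intro i j k x hx
  have hd : ∀ a b c : Fin N, symC Lb a b c x = symC L a b c x
      + (ψ b x * kron a c + ψ c x * kron a b) := by
    intro a b c
    have := hgeo a b c x hx
    simp only [symC] at this ⊢
    linarith
  have hsum : ∀ m : Fin N, (∑ α : Fin N, symC Lb α m α x)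
      = (∑ α : Fin N, symC L α m α x) + ((N:ℝ)+1) * ψ m x := by
    intro m
    have : (∑ α : Fin N, symC Lb α m α x)
        = ∑ α : Fin N, (symC L α m α x + (ψ m x * kron α α + ψ α x * kron α m)) := by
      exact Finset.sum_congr rfl (fun α _ => hd α m α)
    rw [this, Finset.sum_add_distrib, Finset.sum_add_distrib]
    have h1 : (∑ α : Fin N, ψ m x * kron α α) = (N:ℝ) * ψ m x := by
      simp [kron, Finset.sum_const, mul_comm]
    have h2 : (∑ α : Fin N, ψ α x * kron α m) = ψ m x := by
      simp [kron]
    rw [h1, h2]; ring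
  rw [hd i j k, hsum j, hsum k]
  have hne : ((N:ℝ)+1) ≠ 0 := by positivity
  simp only [kron]
  split_ifs <;> first
    | (field_simp; ring)
    | simp_all
end

section
/- Let Γ and Γ̄ be symmetric connection families on U and let P^i_{jk} := Γ̄^i_{jk} − Γ^i_{jk} (symmetric in j, k). Suppose there are smooth families a_{mn} and ā_{mn}, each symmetric in m, n, such that: (i) P^i_{nm|j} + P^i_{jm|n} + Σ_α P^α_{jm} P^i_{αn} + Σ_α P^α_{nm} P^i_{αj} = δ^i_j a_{mn} + δ^i_n a_{mj} for all i, j, m, n (the mapping Γ ↦ Γ̄ is almost geodesic of type π̃₁), and (ii) (−P)^i_{nm‖j} + (−P)^i_{jm‖n} + Σ_α P^α_{jm} P^i_{αn} + Σ_α P^α_{nm} P^i_{αj} = δ^i_j ā_{mn} + δ^i_n ā_{mj} for all i, j, m, n (the inverse mapping Γ̄ ↦ Γ is almost geodesic of type π̃₁ with tensor ā), where | and ‖ denote the covariant derivatives with respect to Γ and Γ̄ and R, R̄ their curvature tensors. Then the following geometrical object is an invariant: R^i_{jmn} + (1/2)(δ^i_n a_{jm} − δ^i_m a_{jn}) = R̄^i_{jmn}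 + (1/2)(δ^i_n ā_{jm} − δ^i_m ā_{jn}) on U for all i, j, m, n (the basic associated invariant of the Weyl type of an almost geodesic mapping of type π̃₁, equation (3.17)). -/
open scoped BigOperators

/-- covariant derivative `P^i_{jk|l}` with respect to a symmetric connection family `Γ`. -/
noncomputable def covDS {N : ℕ} (Γ A : Conn N) (i j k l : Fin N) (x : Pt N) : ℝ :=
  pd l (A i j k) x + ∑ α : Fin N, Γ i α l x * A α j k x
    - ∑ α : Fin N, Γ α j l x * A i α k x
    - ∑ α : Fin N, Γ α k l x * A i j α x

/-- curvature tensor of a symmetric connection family `Γ`. -/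
noncomputable def curvS {N : ℕ} (Γ : Conn N) (i j m n : Fin N) (x : Pt N) : ℝ :=
  pd n (Γ i j m) x - pd m (Γ i j n) x
    + ∑ α : Fin N, (Γ α j m x * Γ i α n x - Γ α j n x * Γ i α m x)
lemma covDS_midsymm {N : ℕ} (Γ A : Conn N) (hA : ∀ e f g, A e f g = A e g f)
    (i j k l : Fin N) (x : Pt N) : covDS Γ A i j k l x = covDS Γ A i k j l x := by
  have e0 : pd l (A i j k) x = pd l (A i k j) x := by rw [hA i j k]
  have e1 : ∑ α : Fin N, Γ i α l x * A α j k x = ∑ α : Fin N, Γ i α l x * A α k j x :=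
    Finset.sum_congr rfl fun α _ => by rw [hA α j k]
  have e2 : ∑ α : Fin N, Γ α j l x * A i α k x = ∑ α : Fin N, Γ α j l x * A i k α x :=
    Finset.sum_congr rfl fun α _ => by rw [hA i α k]
  have e3 : ∑ α : Fin N, Γ α k l x * A i j α x = ∑ α : Fin N, Γ α k l x * A i α j x :=
    Finset.sum_congr rfl fun α _ => by rw [hA i j α]
  simp only [covDS]
  rw [e0, e1, e2, e3]; ring

lemma curv_sub {N : ℕ} (U : Set (Pt N)) (hU : IsOpen U) (Γ Γb : Conn N)
    (hΓ : SmoothConn U Γ) (hΓb : SmoothConn U Γb)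
    (hΓsym : ∀ i j k x, Γ i j k x = Γ i k j x)
    (i j m n : Fin N) (x : Pt N) (hx : x ∈ U) :
    curvS Γb i j m n x - curvS Γ i j m n x
      = covDS Γ (fun e f g y => Γb e f g y - Γ e f g y) i j m n x
        - covDS Γ (fun e f g y => Γb e f g y - Γ e f g y) i j n m x
        + ∑ α : Fin N, ((Γb α j m x - Γ α j m x) * (Γb i α n x - Γ i α n x)
            - (Γb α j n x - Γ α j n x) * (Γb i α m x - Γ i α m x)) := by
  have hdiff : ∀ e f g l : Fin N,
      pd l (fun y => Γb e f g y - Γ e f g y) x = pd l (Γb e f g) x - pd l (Γ e f g) x := by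
    intro e f g l
    have hb : DifferentiableAt ℝ (Γb e f g) x :=
      ((hΓb e f g).contDiffAt (hU.mem_nhds hx)).differentiableAt (by norm_num)
    have hg : DifferentiableAt ℝ (Γ e f g) x :=
      ((hΓ e f g).contDiffAt (hU.mem_nhds hx)).differentiableAt (by norm_num)
    simp [pd, fderiv_fun_sub hb hg]
  have key : ∑ α : Fin N, (Γb α j m x * Γb i α n x - Γb α j n x * Γb i α m x)
      - ∑ α : Fin N, (Γ α j m x * Γ i α n x - Γ α j n x * Γ i α m x)
      - (∑ α : Fin N, Γ i α n x * (Γb α j m x - Γ α j m x)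
         - ∑ α : Fin N, Γ α j n x * (Γb i α m x - Γ i α m x)
         - ∑ α : Fin N, Γ α m n x * (Γb i j α x - Γ i j α x))
      + (∑ α : Fin N, Γ i α m x * (Γb α j n x - Γ α j n x)
         - ∑ α : Fin N, Γ α j m x * (Γb i α n x - Γ i α n x)
         - ∑ α : Fin N, Γ α n m x * (Γb i j α x - Γ i j α x))
      - ∑ α : Fin N, ((Γb α j m x - Γ α j m x) * (Γb i α n x - Γ i α n x)
          - (Γb α j n x - Γ α j n x) * (Γb i α m x - Γ i α m x)) = 0 := by
    simp only [← Finset.sum_sub_distrib, ← Finset.sum_add_distrib]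
    rw [show (0:ℝ) = ∑ _α : Fin N, (0:ℝ) by simp]
    refine Finset.sum_congr rfl fun α _ => ?_
    linear_combination (Γb i j α x - Γ i j α x) * hΓsym α m n x
  simp only [curvS, covDS, hdiff]
  linarith [key]

/-- equation (3.17), the basic associated invariant of the Weyl type
of an almost geodesic mapping of type π̃₁. -/
theorem almost_geodesic_weyl_invariant
    {N : ℕ} (hN : 2 ≤ N) (U : Set (Pt N)) (hU : IsOpen U)
    (Γ Γb : Conn N) (a ab : Fin N → Fin N → Pt N → ℝ)
    (hΓ : SmoothConn U Γ) (hΓb : SmoothConn U Γb)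
    (hΓsym : ∀ i j k x, Γ i j k x = Γ i k j x)
    (hΓbsym : ∀ i j k x, Γb i j k x = Γb i k j x)
    (ha : ∀ m n, ContDiffOn ℝ (⊤ : ℕ∞) (a m n) U)
    (hab : ∀ m n, ContDiffOn ℝ (⊤ : ℕ∞) (ab m n) U)
    (hasym : ∀ m n x, a m n x = a n m x)
    (habsym : ∀ m n x, ab m n x = ab n m x)
    (hag : ∀ i j m n, ∀ x ∈ U,
      covDS Γ (fun e f g y => Γb e f g y - Γ e f g y) i n m j x
        + covDS Γ (fun e f g y => Γb e f g y - Γ e f g y) i j m n x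
        + ∑ α : Fin N, (Γb α j m x - Γ α j m x) * (Γb i α n x - Γ i α n x)
        + ∑ α : Fin N, (Γb α n m x - Γ α n m x) * (Γb i α j x - Γ i α j x)
      = kron i j * a m n x + kron i n * a m j x)
    (hagInv : ∀ i j m n, ∀ x ∈ U,
      covDS Γb (fun e f g y => -(Γb e f g y - Γ e f g y)) i n m j x
        + covDS Γb (fun e f g y => -(Γb e f g y - Γ e f g y)) i j m n x
        + ∑ α : Fin N, (Γb α j m x - Γ α j m x) * (Γb i α n x - Γ i α n x)
        + ∑ α : Fin N, (Γb α n m x - Γ α n m x) * (Γb i α j x - Γ i α j x)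
      = kron i j * ab m n x + kron i n * ab m j x) :
    ∀ i j m n, ∀ x ∈ U,
      curvS Γ i j m n x + (1/2) * (kron i n * a j m x - kron i m * a j n x)
        = curvS Γb i j m n x + (1/2) * (kron i n * ab j m x - kron i m * ab j n x) := by
  intro i j m n x hx
  have h1 := hag i j m n x hx
  have h2 := hag i j n m x hx
  have h3 := hagInv i j m n x hx
  have h4 := hagInv i j n m x hx
  have hQ : (fun e f g y => -(Γb e f g y - Γ e f g y))
      = (fun e f g (y : Pt N) => Γ e f g y - Γb e f g y) := by
    funext e f g y; ring
  rw [hQ] at h3 h4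
  -- symmetry of P and Q in lower indices
  have hPA : ∀ e f g, (fun y => Γb e f g y - Γ e f g y)
      = (fun y => Γb e g f y - Γ e g f y) := by
    intro e f g; funext y; rw [hΓsym, hΓbsym]
  have hQA : ∀ e f g, (fun y => Γ e f g y - Γb e f g y)
      = (fun y => Γ e g f y - Γb e g f y) := by
    intro e f g; funext y; rw [hΓsym, hΓbsym]
  have hsw1 : covDS Γ (fun e f g y => Γb e f g y - Γ e f g y) i n m j x
      = covDS Γ (fun e f g y => Γb e f g y - Γ e f g y) i m n j x :=
    covDS_midsymm _ _ hPA i n m j x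
  have hsw2 : covDS Γb (fun e f g y => Γ e f g y - Γb e f g y) i n m j x
      = covDS Γb (fun e f g y => Γ e f g y - Γb e f g y) i m n j x :=
    covDS_midsymm _ _ hQA i n m j x
  have hc1 := curv_sub U hU Γ Γb hΓ hΓb hΓsym i j m n x hx
  have hc2 := curv_sub U hU Γb Γ hΓb hΓ hΓbsym i j m n x hx
  have hs1 : ∑ α : Fin N, ((Γb α j m x - Γ α j m x) * (Γb i α n x - Γ i α n x)
        - (Γb α j n x - Γ α j n x) * (Γb i α m x - Γ i α m x))
      = ∑ α : Fin N, (Γb α j m x - Γ α j m x) * (Γb i α n x - Γ i α n x)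
        - ∑ α : Fin N, (Γb α j n x - Γ α j n x) * (Γb i α m x - Γ i α m x) :=
    Finset.sum_sub_distrib _ _
  have hs2 : ∑ α : Fin N, (Γb α n m x - Γ α n m x) * (Γb i α j x - Γ i α j x)
      = ∑ α : Fin N, (Γb α m n x - Γ α m n x) * (Γb i α j x - Γ i α j x) :=
    Finset.sum_congr rfl fun α _ => by rw [hΓsym α n m, hΓbsym α n m]
  have hs3 : ∑ α : Fin N, ((Γ α j m x - Γb α j m x) * (Γ i α n x - Γb i α n x)
        - (Γ α j n x - Γb α j n x) * (Γ i α m x - Γb i α m x))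
      = ∑ α : Fin N, (Γb α j m x - Γ α j m x) * (Γb i α n x - Γ i α n x)
        - ∑ α : Fin N, (Γb α j n x - Γ α j n x) * (Γb i α m x - Γ i α m x) := by
    rw [← hs1]; exact Finset.sum_congr rfl fun α _ => by ring
  rw [hasym m j x] at h1
  rw [hasym n m x, hasym n j x] at h2
  rw [habsym m j x] at h3
  rw [habsym n m x, habsym n j x] at h4
  linarith [h1, h2, h3, h4, hc1, hc2, hs1, hs2, hs3, hsw1, hsw2]
end
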